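/- Fix rank levels 1 ≤ r₁ < r₂ ≤ b and let s₁(n) = α₁n + o(n), s₂(n) = α₂n + o(n) with 0 < α₁ < α₂ < 1. Then the double-level winning probability P_DLP^(n) converges as n → ∞ to α₁^{r₁}∫_{α₁}^{α₂} x^{-r₁}( r₁ + Σ_{j=r₁+1}^{b}Σ_{k=1}^{r₁} C(j-1,k-1)x^{k-1}(1-x)^{j-k} )dx + α₁^{r₁}α₂^{r₂-r₁}∫_{α₂}^{1} x^{-r₂}( r₂ + Σ_{j=r₂+1}^{b}Σ_{k=1}^{r₂} C(j-1,k-1)x^{k-1}(1-x)^{j-k} )dx. -/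

import Mathlib

/-!
On the scale `i ≈ x n` both ingredients of a summand of `Pdlp` have limits:
`(s)_r / (i - 1)_r → (α / x)^r`, and the hypergeometric weight
`C(j-1,k-1) C(n-j,i-k) / C(n-1,i-1) = C(j-1,k-1) (i-1)_{k-1} (n-i)_{j-k} / (n-1)_{j-1}`
tends to `C(j-1,k-1) x^(k-1) (1-x)^(j-k)`. Hence `n` times the `i`-th summand converges to the
integrand at `x = i / n`, and each stage of `Pdlp` is a Riemann sum. Writing such a sum as the
integral of the step function `x ↦ n T_n ⌈x n⌉` and bounding every falling-factorial and binomial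
ratio by `1`, dominated convergence yields the two integrals; the last term is `O(1/n)`.
-/

open Filter Finset

/-- Exact winning probability formula of the double-level policy with rank levels
`r₁ < r₂` and position thresholds `s₁ < s₂` for `n` candidates, worst allowable rank `b`. -/
noncomputable def Pdlp (n b s₁ s₂ r₁ r₂ : ℕ) : ℝ :=
  (∑ i ∈ Finset.Icc (s₁ + 1) s₂,
      ((Nat.descFactorial s₁ r₁ : ℝ) / (Nat.descFactorial (i - 1) r₁ : ℝ)) *
        ((r₁ : ℝ) / (n : ℝ) + (1 / (n : ℝ)) *
          ∑ j ∈ Finset.Icc (r₁ + 1) b, ∑ k ∈ Finset.Icc 1 r₁,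
            ((Nat.choose (j - 1) (k - 1) * Nat.choose (n - j) (i - k) : ℕ) : ℝ)
              / (Nat.choose (n - 1) (i - 1) : ℝ)))
    + (∑ i ∈ Finset.Icc (s₂ + 1) (n - 1),
      (((Nat.descFactorial s₁ r₁ * Nat.descFactorial (s₂ - r₁) (r₂ - r₁) : ℕ) : ℝ)
          / (Nat.descFactorial (i - 1) r₂ : ℝ)) *
        ((r₂ : ℝ) / (n : ℝ) + (1 / (n : ℝ)) *
          ∑ j ∈ Finset.Icc (r₂ + 1) b, ∑ k ∈ Finset.Icc 1 r₂,
            ((Nat.choose (j - 1) (k - 1) * Nat.choose (n - j) (i - k) : ℕ) : ℝ)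
              / (Nat.choose (n - 1) (i - 1) : ℝ)))
    + (((Nat.descFactorial s₁ r₁ * Nat.descFactorial (s₂ - r₁) (r₂ - r₁) : ℕ) : ℝ)
          / (Nat.descFactorial (n - 1) r₂ : ℝ)) * ((b : ℝ) / (n : ℝ))

open MeasureTheory Topology

namespace Nat

-- With `A = i - k`, `B = n - j - (i - k)`, `p = k - 1`, `q = j - k` this is the identity
-- `C(n-j, i-k) / C(n-1, i-1) = (i-1)_{k-1} (n-i)_{j-k} / (n-1)_{j-1}`.
theorem choose_mul_descFactorial_mul_descFactorial (A B p q : ℕ) :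
    (A + B + p + q).choose (A + p) * (A + p).descFactorial p * (B + q).descFactorial q =
      (A + B).choose A * (A + B + p + q).descFactorial (p + q) := by
  have h1 := factorial_mul_descFactorial (Nat.le_add_left p A)
  have h2 := factorial_mul_descFactorial (Nat.le_add_left q B)
  have h3 := factorial_mul_descFactorial (show p + q ≤ A + B + p + q by omega)
  have h4 := choose_mul_factorial_mul_factorial (show A + p ≤ A + B + p + q by omega)
  have h5 := add_choose_mul_factorial_mul_factorial B A
  simp only [Nat.add_sub_cancel] at h1 h2
  rw [show A + B + p + q - (p + q) = A + B by omega] at h3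
  rw [show A + B + p + q - (A + p) = B + q by omega] at h4
  rw [Nat.add_comm B A] at h5
  apply Nat.mul_right_cancel (Nat.mul_pos A.factorial_pos B.factorial_pos)
  calc _ = (A + B + p + q).choose (A + p) * (A + p)! * (B + q)! := by rw [← h1, ← h2]; ring
    _ = _ := by rw [h4, ← h3, ← h5]; ring

theorem choose_le_choose_add_add (m t d : ℕ) : m.choose t ≤ (m + d).choose (t + d) := by
  induction d with
  | zero => rfl
  | succ d ih => exact ih.trans (by rw [← Nat.add_assoc, ← Nat.add_assoc, choose_succ_succ']; omega)

theorem choose_sub_le_choose_sub_one {n i j k : ℕ} (hk : 1 ≤ k) (hkj : k ≤ j) (hki : k ≤ i)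
    (hkn : k ≤ n) : (n - j).choose (i - k) ≤ (n - 1).choose (i - 1) :=
  calc (n - j).choose (i - k) ≤ (n - k).choose (i - k) := choose_le_choose _ (by omega)
    _ ≤ (n - k + (k - 1)).choose (i - k + (k - 1)) := choose_le_choose_add_add _ _ _
    _ = _ := by congr 1 <;> omega

theorem descFactorial_mul_descFactorial_sub_le {s₁ s₂ m r₁ r₂ : ℕ} (hr : r₁ ≤ r₂)
    (h₁ : s₁ ≤ s₂) (h₂ : s₂ ≤ m) :
    s₁.descFactorial r₁ * (s₂ - r₁).descFactorial (r₂ - r₁) ≤ m.descFactorial r₂ := by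
  rw [← Nat.descFactorial_mul_descFactorial hr, Nat.mul_comm]
  exact Nat.mul_le_mul (Nat.descFactorial_le _ (by omega)) (Nat.descFactorial_le _ (by omega))

end Nat

section RatioLimits

variable {u : ℕ → ℕ} {y : ℝ}

theorem tendsto_natCast_sub_div (hu : Tendsto (fun n => (u n : ℝ) / n) atTop (𝓝 y)) (d : ℕ) :
    Tendsto (fun n => ((u n - d : ℕ) : ℝ) / n) atTop (𝓝 y) := by
  have hlow : Tendsto (fun n => (u n : ℝ) / n - d / n) atTop (𝓝 y) := by
    simpa using hu.sub (tendsto_const_div_atTop_nhds_zero_nat (d : ℝ))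
  refine tendsto_of_tendsto_of_tendsto_of_le_of_le hlow hu (fun n => ?_) (fun n => ?_)
  · rw [← sub_div]
    gcongr
    have : (u n : ℝ) ≤ ((u n - d : ℕ) : ℝ) + d := by norm_cast; omega
    linarith
  · gcongr
    exact_mod_cast Nat.sub_le _ _

theorem tendsto_natCast_add_div (hu : Tendsto (fun n => (u n : ℝ) / n) atTop (𝓝 y)) (d : ℕ) :
    Tendsto (fun n => ((u n + d : ℕ) : ℝ) / n) atTop (𝓝 y) := by
  simpa [add_div] using hu.add (tendsto_const_div_atTop_nhds_zero_nat (d : ℝ))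

theorem eventually_le_of_tendsto_div (hu : Tendsto (fun n => (u n : ℝ) / n) atTop (𝓝 y))
    (hy : 0 < y) (d : ℕ) : ∀ᶠ n in atTop, d ≤ u n := by
  filter_upwards [(tendsto_natCast_sub_div hu d).eventually (eventually_gt_nhds hy)] with n hn
  have : u n - d ≠ 0 := fun h => by simp [h] at hn
  omega

theorem eventually_add_le_of_tendsto_div (hu : Tendsto (fun n => (u n : ℝ) / n) atTop (𝓝 y))
    (hy : y < 1) (d : ℕ) : ∀ᶠ n in atTop, u n + d ≤ n := by
  filter_upwards [(tendsto_natCast_add_div hu d).eventually (eventually_lt_nhds hy),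
    eventually_gt_atTop 0] with n hn hn0
  rw [div_lt_one (by exact_mod_cast hn0)] at hn
  exact_mod_cast hn.le

theorem eventually_le_of_tendsto_div_of_lt {v : ℕ → ℕ} {z : ℝ}
    (hu : Tendsto (fun n => (u n : ℝ) / n) atTop (𝓝 y))
    (hv : Tendsto (fun n => (v n : ℝ) / n) atTop (𝓝 z)) (hyz : y < z) :
    ∀ᶠ n in atTop, u n ≤ v n := by
  filter_upwards [hu.eventually_lt hv hyz, eventually_gt_atTop 0] with n hn hn0
  rw [div_lt_div_iff_of_pos_right (by positivity)] at hn
  exact_mod_cast hn.le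

theorem tendsto_self_sub_div (hu : Tendsto (fun n => (u n : ℝ) / n) atTop (𝓝 y))
    (hun : ∀ᶠ n in atTop, u n ≤ n) :
    Tendsto (fun n => ((n - u n : ℕ) : ℝ) / n) atTop (𝓝 (1 - y)) := by
  refine (tendsto_const_nhds.sub hu).congr' ?_
  filter_upwards [hun, eventually_gt_atTop 0] with n hn hn0
  rw [Nat.cast_sub hn, sub_div, div_self (by positivity)]

theorem tendsto_natCast_sub_one_div : Tendsto (fun n : ℕ => ((n - 1 : ℕ) : ℝ) / n) atTop (𝓝 1) := by
  refine tendsto_natCast_sub_div (tendsto_const_nhds.congr' ?_) 1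
  filter_upwards [eventually_gt_atTop 0] with n hn
  rw [div_self (by positivity)]

theorem tendsto_descFactorial_div_pow (hu : Tendsto (fun n => (u n : ℝ) / n) atTop (𝓝 y))
    (t : ℕ) :
    Tendsto (fun n => ((u n).descFactorial t : ℝ) / (n : ℝ) ^ t) atTop (𝓝 (y ^ t)) := by
  have hfac := tendsto_finsetProd (range t) fun m (_ : m ∈ range t) => tendsto_natCast_sub_div hu m
  rw [prod_const, card_range] at hfac
  refine hfac.congr fun n => ?_
  rw [Nat.descFactorial_eq_prod_range, Nat.cast_prod, prod_div_distrib, prod_const, card_range]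

theorem tendsto_div_descFactorial {N : ℕ → ℕ} {r : ℕ} {L : ℝ}
    (hN : Tendsto (fun n => (N n : ℝ) / (n : ℝ) ^ r) atTop (𝓝 L))
    (hu : Tendsto (fun n => (u n : ℝ) / n) atTop (𝓝 y)) (hy : y ≠ 0) :
    Tendsto (fun n => (N n : ℝ) / (u n).descFactorial r) atTop (𝓝 (L / y ^ r)) := by
  refine (hN.div (tendsto_descFactorial_div_pow hu r) (pow_ne_zero r hy)).congr' ?_
  filter_upwards [eventually_gt_atTop 0] with n hn
  exact div_div_div_cancel_right₀ (by positivity) _ _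

theorem tendsto_mul_div_pow_of_add_eq {N₁ N₂ : ℕ → ℕ} {p q m : ℕ} {L₁ L₂ : ℝ}
    (h₁ : Tendsto (fun n => (N₁ n : ℝ) / (n : ℝ) ^ p) atTop (𝓝 L₁))
    (h₂ : Tendsto (fun n => (N₂ n : ℝ) / (n : ℝ) ^ q) atTop (𝓝 L₂)) (hpq : p + q = m) :
    Tendsto (fun n => ((N₁ n * N₂ n : ℕ) : ℝ) / (n : ℝ) ^ m) atTop (𝓝 (L₁ * L₂)) := by
  refine (h₁.mul h₂).congr fun n => ?_
  rw [← hpq, pow_add, Nat.cast_mul, div_mul_div_comm]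

end RatioLimits

theorem natCeil_mul_eq_iff {n i : ℕ} (hn : 0 < n) (hi : i ≠ 0) {x : ℝ} :
    ⌈x * n⌉₊ = i ↔ x ∈ Set.Ioc (((i - 1 : ℕ) : ℝ) / n) (i / n) := by
  have hn' : (0 : ℝ) < n := by exact_mod_cast hn
  rw [Nat.ceil_eq_iff hi, Set.mem_Ioc, div_lt_iff₀ hn', le_div_iff₀ hn']

theorem natCeil_mul_mem_Icc_iff {n : ℕ} (hn : 0 < n) (a c : ℕ) {x : ℝ} :
    ⌈x * n⌉₊ ∈ Icc (a + 1) c ↔ x ∈ Set.Ioc ((a : ℝ) / n) (c / n) := by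
  have hn' : (0 : ℝ) < n := by exact_mod_cast hn
  rw [mem_Icc, Set.mem_Ioc, div_lt_iff₀ hn', le_div_iff₀ hn', Nat.add_one_le_iff, Nat.lt_ceil,
    Nat.ceil_le]

theorem sum_Icc_eq_integral_indicator {n : ℕ} (hn : 0 < n) (a c : ℕ) (w : ℕ → ℝ) :
    ∑ i ∈ Icc (a + 1) c, w i =
      ∫ x, (Set.Ioc ((a : ℝ) / n) (c / n)).indicator (fun x => n * w ⌈x * n⌉₊) x := by
  have hstep : (Set.Ioc ((a : ℝ) / n) (c / n)).indicator (fun x => n * w ⌈x * n⌉₊) =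
      fun x => ∑ i ∈ Icc (a + 1) c,
        (Set.Ioc (((i - 1 : ℕ) : ℝ) / n) (i / n)).indicator (fun _ => n * w i) x := by
    funext x
    have hpiece : ∀ i ∈ Icc (a + 1) c,
        (Set.Ioc (((i - 1 : ℕ) : ℝ) / n) (i / n)).indicator (fun _ => n * w i) x =
          if ⌈x * n⌉₊ = i then n * w i else 0 := fun i hi => by
      simp only [Set.indicator_apply, natCeil_mul_eq_iff hn (show i ≠ 0 by grind)]
    rw [sum_congr rfl hpiece, sum_ite_eq, Set.indicator_apply]
    exact if_congr (natCeil_mul_mem_Icc_iff hn a c).symm rfl rfl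
  rw [hstep, integral_finsetSum _ fun i _ => (integrable_indicator_iff measurableSet_Ioc).2
    (integrableOn_const measure_Ioc_lt_top.ne)]
  refine sum_congr rfl fun i hi => ?_
  have hi1 : (((i - 1 : ℕ) : ℝ)) = i - 1 := by rw [Nat.cast_sub (by grind)]; simp
  have hn' : (n : ℝ) ≠ 0 := by positivity
  rw [integral_indicator_const _ measurableSet_Ioc, measureReal_def, Real.volume_Ioc, hi1,
    show (i : ℝ) / n - (i - 1) / n = 1 / n by ring, ENNReal.toReal_ofReal (by positivity),
    smul_eq_mul, one_div, inv_mul_cancel_left₀ hn']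

theorem eventually_mem_Ioc_iff_of_tendsto {X ι : Type*} [LinearOrder X] [TopologicalSpace X]
    [OrderTopology X] {l : Filter ι} {u v : ι → X} {a b x : X} (hu : Tendsto u l (𝓝 a))
    (hv : Tendsto v l (𝓝 b)) (hxa : x ≠ a) (hxb : x ≠ b) :
    ∀ᶠ n in l, (x ∈ Set.Ioc (u n) (v n) ↔ x ∈ Set.Ioc a b) := by
  have hleft : ∀ᶠ n in l, (u n < x ↔ a < x) := by
    rcases hxa.lt_or_gt with h | h
    · filter_upwards [hu.eventually (eventually_gt_nhds h)] with n hn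
      exact iff_of_false (lt_asymm hn) (lt_asymm h)
    · filter_upwards [hu.eventually (eventually_lt_nhds h)] with n hn
      exact iff_of_true hn h
  have hright : ∀ᶠ n in l, (x ≤ v n ↔ x ≤ b) := by
    rcases hxb.lt_or_gt with h | h
    · filter_upwards [hv.eventually (eventually_gt_nhds h)] with n hn
      exact iff_of_true hn.le h.le
    · filter_upwards [hv.eventually (eventually_lt_nhds h)] with n hn
      exact iff_of_false (not_le.2 hn) (not_le.2 h)
  filter_upwards [hleft, hright] with n hl hr
  simp only [Set.mem_Ioc, hl, hr]

theorem ae_tendsto_indicator_Ioc {ι : Type*} {l : Filter ι} {μ : Measure ℝ} [NullSingletonClass μ]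
    {u v : ι → ℝ} {α β : ℝ} {f : ι → ℝ → ℝ} {g : ℝ → ℝ} (hu : Tendsto u l (𝓝 α))
    (hv : Tendsto v l (𝓝 β)) (hlim : ∀ x ∈ Set.Ioo α β, Tendsto (fun n => f n x) l (𝓝 (g x))) :
    ∀ᵐ x ∂μ, Tendsto (fun n => (Set.Ioc (u n) (v n)).indicator (f n) x) l
      (𝓝 ((Set.Ioc α β).indicator g x)) := by
  filter_upwards [measure_eq_zero_iff_ae_notMem.1 ((Set.toFinite {α, β}).measure_zero μ)]
    with x hx
  simp only [Set.mem_insert_iff, Set.mem_singleton_iff, not_or] at hx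
  have hev := eventually_mem_Ioc_iff_of_tendsto hu hv hx.1 hx.2
  by_cases hxI : x ∈ Set.Ioc α β
  · rw [Set.indicator_of_mem hxI]
    refine (hlim x ⟨hxI.1, hxI.2.lt_of_ne hx.2⟩).congr' ?_
    filter_upwards [hev] with n hn
    rw [Set.indicator_of_mem (hn.2 hxI)]
  · rw [Set.indicator_of_notMem hxI]
    refine tendsto_const_nhds.congr' ?_
    filter_upwards [hev] with n hn
    rw [Set.indicator_of_notMem (mt hn.1 hxI)]

theorem tendsto_sum_Icc_intervalIntegral (T : ℕ → ℕ → ℝ) (g : ℝ → ℝ) {a c : ℕ → ℕ}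
    {α β M : ℝ} (hαβ : α ≤ β) (ha : Tendsto (fun n => (a n : ℝ) / n) atTop (𝓝 α))
    (hc : Tendsto (fun n => (c n : ℝ) / n) atTop (𝓝 β))
    (hbd : ∀ᶠ n in atTop, ∀ i ∈ Icc (a n + 1) (c n), |n * T n i| ≤ M)
    (hlim : ∀ x ∈ Set.Ioo α β, Tendsto (fun n : ℕ => n * T n ⌈x * n⌉₊) atTop (𝓝 (g x))) :
    Tendsto (fun n => ∑ i ∈ Icc (a n + 1) (c n), T n i) atTop (𝓝 (∫ x in α..β, g x)) := by
  set F : ℕ → ℝ → ℝ := fun n =>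
    (Set.Ioc ((a n : ℝ) / n) (c n / n)).indicator (fun x => n * T n ⌈x * n⌉₊) with hF
  set bound : ℝ → ℝ := (Set.Ioc 0 (β + 1)).indicator fun _ => |M| with hbound_def
  have hsum : ∀ᶠ n in atTop, ∫ x, F n x = ∑ i ∈ Icc (a n + 1) (c n), T n i := by
    filter_upwards [eventually_gt_atTop 0] with n hn
    exact (sum_Icc_eq_integral_indicator hn _ _ _).symm
  have hmeas : ∀ n, AEStronglyMeasurable (F n) := fun n =>
    ((measurable_const.mul ((measurable_from_nat (f := T n)).comp
      (Nat.measurable_ceil.comp (measurable_id.mul_const _)))).indicator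
        measurableSet_Ioc).aestronglyMeasurable
  have hbound : ∀ᶠ n in atTop, ∀ᵐ x, ‖F n x‖ ≤ bound x := by
    filter_upwards [hbd, hc.eventually (eventually_le_nhds (lt_add_one β)),
      eventually_gt_atTop 0] with n hbd hcβ hn
    refine Eventually.of_forall fun x => ?_
    by_cases hx : x ∈ Set.Ioc ((a n : ℝ) / n) (c n / n)
    · have hx' : x ∈ Set.Ioc 0 (β + 1) := ⟨(by positivity : (0 : ℝ) ≤ a n / n).trans_lt hx.1,
        hx.2.trans hcβ⟩
      simp only [hF, hbound_def, Set.indicator_of_mem hx, Set.indicator_of_mem hx',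
        Real.norm_eq_abs]
      exact (hbd _ ((natCeil_mul_mem_Icc_iff hn _ _).2 hx)).trans (le_abs_self M)
    · simp only [hF, Set.indicator_of_notMem hx, norm_zero]
      exact Set.indicator_nonneg (fun _ _ => abs_nonneg M) x
  have hbint : Integrable bound := (integrable_indicator_iff measurableSet_Ioc).2
    (integrableOn_const measure_Ioc_lt_top.ne)
  have hlimae : ∀ᵐ x, Tendsto (fun n => F n x) atTop (𝓝 ((Set.Ioc α β).indicator g x)) :=
    ae_tendsto_indicator_Ioc ha hc hlim
  have hdct := tendsto_integral_filter_of_dominated_convergence bound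
    (Eventually.of_forall hmeas) hbound hbint hlimae
  rw [integral_indicator measurableSet_Ioc, ← intervalIntegral.integral_of_le hαβ] at hdct
  exact hdct.congr' hsum

noncomputable def rankSum (n b r i : ℕ) : ℝ :=
  ∑ j ∈ Finset.Icc (r + 1) b, ∑ k ∈ Finset.Icc 1 r,
    ((Nat.choose (j - 1) (k - 1) * Nat.choose (n - j) (i - k) : ℕ) : ℝ)
      / (Nat.choose (n - 1) (i - 1) : ℝ)

noncomputable def rankDensity (b r : ℕ) (x : ℝ) : ℝ :=
  ∑ j ∈ Finset.Icc (r + 1) b, ∑ k ∈ Finset.Icc 1 r,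
    (Nat.choose (j - 1) (k - 1) : ℝ) * x ^ (k - 1) * (1 - x) ^ (j - k)

noncomputable def stageTerm (N n b r i : ℕ) : ℝ :=
  ((N : ℝ) / (Nat.descFactorial (i - 1) r : ℝ)) *
    ((r : ℝ) / (n : ℝ) + (1 / (n : ℝ)) * rankSum n b r i)

theorem Pdlp_eq (n b s₁ s₂ r₁ r₂ : ℕ) :
    Pdlp n b s₁ s₂ r₁ r₂ =
      ∑ i ∈ Icc (s₁ + 1) s₂, stageTerm (s₁.descFactorial r₁) n b r₁ i +
      ∑ i ∈ Icc (s₂ + 1) (n - 1),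
        stageTerm (s₁.descFactorial r₁ * (s₂ - r₁).descFactorial (r₂ - r₁)) n b r₂ i +
      ((s₁.descFactorial r₁ * (s₂ - r₁).descFactorial (r₂ - r₁) : ℕ) : ℝ) /
        (n - 1).descFactorial r₂ * (b / n) := rfl

theorem natCast_mul_stageTerm {n : ℕ} (hn : n ≠ 0) (N b r i : ℕ) :
    n * stageTerm N n b r i = N / (i - 1).descFactorial r * (r + rankSum n b r i) := by
  unfold stageTerm
  field_simp

theorem tendsto_choose_div_choose {i : ℕ → ℕ} {x : ℝ}
    (hi : Tendsto (fun n => (i n : ℝ) / n) atTop (𝓝 x)) (hx0 : 0 < x) (hx1 : x < 1)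
    {j k : ℕ} (hk : 1 ≤ k) (hkj : k ≤ j) :
    Tendsto (fun n => ((n - j).choose (i n - k) : ℝ) / (n - 1).choose (i n - 1)) atTop
      (𝓝 (x ^ (k - 1) * (1 - x) ^ (j - k))) := by
  have hin : ∀ᶠ n in atTop, i n ≤ n :=
    (eventually_add_le_of_tendsto_div hi hx1 0).mono fun n h => h
  have hnum := tendsto_mul_div_pow_of_add_eq
    (tendsto_descFactorial_div_pow (tendsto_natCast_sub_div hi 1) (k - 1))
    (tendsto_descFactorial_div_pow (tendsto_self_sub_div hi hin) (j - k)) (m := j - 1) (by omega)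
  have hlim := tendsto_div_descFactorial hnum tendsto_natCast_sub_one_div one_ne_zero
  rw [one_pow, div_one] at hlim
  refine hlim.congr' ?_
  filter_upwards [eventually_le_of_tendsto_div hi hx0 j, eventually_add_le_of_tendsto_div hi hx1 j]
    with n hji hijn
  obtain ⟨A, B, p, q, hA, hB, hp, hq⟩ : ∃ A B p q, i n - k = A ∧ n - j - (i n - k) = B ∧
    k - 1 = p ∧ j - k = q := ⟨_, _, _, _, rfl, rfl, rfl, rfl⟩
  have key := Nat.choose_mul_descFactorial_mul_descFactorial A B p q
  rw [show A + B + p + q = n - 1 by omega, show A + p = i n - 1 by omega,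
    show B + q = n - i n by omega, show A + B = n - j by omega, show p + q = j - 1 by omega,
    ← hA, ← hp, ← hq, Nat.mul_assoc] at key
  rw [div_eq_div_iff (by exact_mod_cast (Nat.descFactorial_pos.2 (by omega)).ne')
    (by exact_mod_cast (Nat.choose_pos (by omega)).ne')]
  exact_mod_cast (Nat.mul_comm _ _).trans key

theorem tendsto_rankSum {i : ℕ → ℕ} {x : ℝ} (hi : Tendsto (fun n => (i n : ℝ) / n) atTop (𝓝 x))
    (hx0 : 0 < x) (hx1 : x < 1) (b r : ℕ) :
    Tendsto (fun n => rankSum n b r (i n)) atTop (𝓝 (rankDensity b r x)) := by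
  refine tendsto_finsetSum _ fun j hj => tendsto_finsetSum _ fun k hk => ?_
  simp only [Nat.cast_mul, mul_div_assoc, mul_assoc]
  exact (tendsto_choose_div_choose hi hx0 hx1 (mem_Icc.1 hk).1 (by grind)).const_mul _

theorem rankSum_nonneg (n b r i : ℕ) : 0 ≤ rankSum n b r i := by
  unfold rankSum
  positivity

theorem rankSum_le {n b r i : ℕ} (hri : r ≤ i) (hin : i ≤ n) :
    rankSum n b r i ≤ ∑ j ∈ Icc (r + 1) b, ∑ k ∈ Icc 1 r, ((j - 1).choose (k - 1) : ℝ) := by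
  refine sum_le_sum fun j hj => sum_le_sum fun k hk => ?_
  rw [Nat.cast_mul, mul_div_assoc]
  refine mul_le_of_le_one_right (by positivity) (div_le_one_of_le₀ ?_ (by positivity))
  exact_mod_cast Nat.choose_sub_le_choose_sub_one (mem_Icc.1 hk).1 (by grind) (by grind) (by grind)

theorem abs_natCast_mul_stageTerm_le {N n b r i : ℕ} (hn : n ≠ 0)
    (hN : N ≤ (i - 1).descFactorial r) (hri : r ≤ i) (hin : i ≤ n) :
    |n * stageTerm N n b r i| ≤
      r + ∑ j ∈ Icc (r + 1) b, ∑ k ∈ Icc 1 r, ((j - 1).choose (k - 1) : ℝ) := by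
  have hsum := rankSum_nonneg n b r i
  have hratio : (N : ℝ) / (i - 1).descFactorial r ≤ 1 :=
    div_le_one_of_le₀ (by exact_mod_cast hN) (by positivity)
  rw [natCast_mul_stageTerm hn, abs_of_nonneg (by positivity)]
  calc _ ≤ 1 * (r + rankSum n b r i) := by gcongr
    _ ≤ _ := by linarith [rankSum_le (b := b) hri hin]

theorem tendsto_natCast_mul_stageTerm {N i : ℕ → ℕ} {r : ℕ} {L x : ℝ}
    (hN : Tendsto (fun n => (N n : ℝ) / (n : ℝ) ^ r) atTop (𝓝 L))
    (hi : Tendsto (fun n => (i n : ℝ) / n) atTop (𝓝 x)) (hx0 : 0 < x) (hx1 : x < 1) (b : ℕ) :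
    Tendsto (fun n : ℕ => n * stageTerm (N n) n b r (i n)) atTop
      (𝓝 (L * (1 / x ^ r * (r + rankDensity b r x)))) := by
  have hlim := (tendsto_div_descFactorial hN (tendsto_natCast_sub_div hi 1) hx0.ne').mul
    ((tendsto_const_nhds (x := (r : ℝ))).add (tendsto_rankSum hi hx0 hx1 b r))
  rw [show L * (1 / x ^ r * (r + rankDensity b r x)) = L / x ^ r * (r + rankDensity b r x) by
    ring]
  refine hlim.congr' ?_
  filter_upwards [eventually_ne_atTop 0] with n hn
  exact (natCast_mul_stageTerm hn _ _ _ _).symm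

theorem tendsto_sum_stageTerm {N a c : ℕ → ℕ} {r : ℕ} {α β L : ℝ} (hα : 0 < α) (hαβ : α ≤ β)
    (hβ : β ≤ 1) (ha : Tendsto (fun n => (a n : ℝ) / n) atTop (𝓝 α))
    (hc : Tendsto (fun n => (c n : ℝ) / n) atTop (𝓝 β)) (hcn : ∀ᶠ n in atTop, c n ≤ n)
    (hN : Tendsto (fun n => (N n : ℝ) / (n : ℝ) ^ r) atTop (𝓝 L))
    (hNle : ∀ᶠ n in atTop, ∀ i ∈ Icc (a n + 1) (c n), N n ≤ (i - 1).descFactorial r) (b : ℕ) :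
    Tendsto (fun n => ∑ i ∈ Icc (a n + 1) (c n), stageTerm (N n) n b r i) atTop
      (𝓝 (L * ∫ x in α..β, 1 / x ^ r * (r + rankDensity b r x))) := by
  rw [← intervalIntegral.integral_const_mul]
  refine tendsto_sum_Icc_intervalIntegral _ _ (M := r + ∑ j ∈ Icc (r + 1) b, ∑ k ∈ Icc 1 r,
    ((j - 1).choose (k - 1) : ℝ)) hαβ ha hc ?_ fun x hx =>
    tendsto_natCast_mul_stageTerm hN
      ((tendsto_nat_ceil_mul_div_atTop (hα.trans hx.1).le).comp tendsto_natCast_atTop_atTop)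
      (hα.trans hx.1) (hx.2.trans_le hβ) b
  filter_upwards [hNle, hcn, eventually_le_of_tendsto_div ha hα r, eventually_ne_atTop 0]
    with n hNle hcn har hn i hi
  have hi' := mem_Icc.1 hi
  exact abs_natCast_mul_stageTerm_le hn (hNle i hi) (by omega) (by omega)

theorem dlp_win_prob_tendsto_general (r₁ r₂ b : ℕ) (hr12 : r₁ < r₂)
    (α₁ α₂ : ℝ) (hα1 : 0 < α₁) (hα12 : α₁ < α₂) (hα2 : α₂ < 1) (s₁ s₂ : ℕ → ℕ)
    (hs1 : Tendsto (fun n : ℕ => (s₁ n : ℝ) / (n : ℝ)) atTop (nhds α₁))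
    (hs2 : Tendsto (fun n : ℕ => (s₂ n : ℝ) / (n : ℝ)) atTop (nhds α₂)) :
    Tendsto (fun n : ℕ => Pdlp n b (s₁ n) (s₂ n) r₁ r₂) atTop
      (nhds (α₁ ^ r₁ * (∫ x in α₁..α₂, (1 / x ^ r₁) *
          ((r₁ : ℝ) + ∑ j ∈ Finset.Icc (r₁ + 1) b, ∑ k ∈ Finset.Icc 1 r₁,
            (Nat.choose (j - 1) (k - 1) : ℝ) * x ^ (k - 1) * (1 - x) ^ (j - k)))
        + α₁ ^ r₁ * α₂ ^ (r₂ - r₁) * (∫ x in α₂..1, (1 / x ^ r₂) *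
          ((r₂ : ℝ) + ∑ j ∈ Finset.Icc (r₂ + 1) b, ∑ k ∈ Finset.Icc 1 r₂,
            (Nat.choose (j - 1) (k - 1) : ℝ) * x ^ (k - 1) * (1 - x) ^ (j - k))))) := by
  have hN₁ := tendsto_descFactorial_div_pow hs1 r₁
  have hN₂ := tendsto_mul_div_pow_of_add_eq hN₁
    (tendsto_descFactorial_div_pow (tendsto_natCast_sub_div hs2 r₁) (r₂ - r₁)) (m := r₂) (by omega)
  have hs₁₂ := eventually_le_of_tendsto_div_of_lt hs1 hs2 hα12
  have hstage₁ := tendsto_sum_stageTerm hα1 hα12.le hα2.le hs1 hs2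
    ((eventually_add_le_of_tendsto_div hs2 hα2 0).mono fun n h => h) hN₁
    (Eventually.of_forall fun n i hi => Nat.descFactorial_le r₁ (by grind)) b
  have hstage₂ := tendsto_sum_stageTerm (hα1.trans hα12) hα2.le le_rfl hs2
    tendsto_natCast_sub_one_div (Eventually.of_forall fun n => Nat.sub_le n 1) hN₂
    (hs₁₂.mono fun n h i hi => Nat.descFactorial_mul_descFactorial_sub_le hr12.le h (by grind))
    b
  have hlast := (tendsto_div_descFactorial hN₂ tendsto_natCast_sub_one_div one_ne_zero).mul
    (tendsto_const_div_atTop_nhds_zero_nat (b : ℝ))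
  simpa only [Pdlp_eq, rankDensity, mul_zero, add_zero] using (hstage₁.add hstage₂).add hlast

/-- Fix `1 ≤ r₁ < r₂ ≤ b`, and let `s₁(n) = α₁n + o(n)`, `s₂(n) = α₂n + o(n)` with
`0 < α₁ < α₂ < 1`. Then the double-level winning probability converges to
`α₁^{r₁}∫_{α₁}^{α₂} x^{-r₁}(r₁ + Σ…)dx + α₁^{r₁}α₂^{r₂-r₁}∫_{α₂}^{1} x^{-r₂}(r₂ + Σ…)dx`. -/
theorem dlp_win_prob_tendsto (r₁ r₂ b : ℕ) (hr1 : 1 ≤ r₁) (hr12 : r₁ < r₂) (hr2b : r₂ ≤ b)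
    (α₁ α₂ : ℝ) (hα1 : 0 < α₁) (hα12 : α₁ < α₂) (hα2 : α₂ < 1) (s₁ s₂ : ℕ → ℕ)
    (hs1 : Tendsto (fun n : ℕ => (s₁ n : ℝ) / (n : ℝ)) atTop (nhds α₁))
    (hs2 : Tendsto (fun n : ℕ => (s₂ n : ℝ) / (n : ℝ)) atTop (nhds α₂)) :
    Tendsto (fun n : ℕ => Pdlp n b (s₁ n) (s₂ n) r₁ r₂) atTop
      (nhds (α₁ ^ r₁ * (∫ x in α₁..α₂, (1 / x ^ r₁) *
          ((r₁ : ℝ) + ∑ j ∈ Finset.Icc (r₁ + 1) b, ∑ k ∈ Finset.Icc 1 r₁,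
            (Nat.choose (j - 1) (k - 1) : ℝ) * x ^ (k - 1) * (1 - x) ^ (j - k)))
        + α₁ ^ r₁ * α₂ ^ (r₂ - r₁) * (∫ x in α₂..1, (1 / x ^ r₂) *
          ((r₂ : ℝ) + ∑ j ∈ Finset.Icc (r₂ + 1) b, ∑ k ∈ Finset.Icc 1 r₂,
            (Nat.choose (j - 1) (k - 1) : ℝ) * x ^ (k - 1) * (1 - x) ^ (j - k))))) :=
  dlp_win_prob_tendsto_general r₁ r₂ b hr12 α₁ α₂ hα1 hα12 hα2 s₁ s₂ hs1 hs2
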